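/- Let x, s, u ∈ ℂ be nonzero and λ, ε ∈ ℝ. Then for every z ∈ ℂ∖{0} such that the denominators of f_{x,s,u,λ,ε} are nonzero at z and at q²z, one has (π_{λ,ε}(Y_{s,u}) f_{x,s,u,λ,ε})(z) = (μ_x − μ_s)·f_{x,s,u,λ,ε}(z); that is, f_{x,s,u,λ,ε} is an eigenfunction of π_{λ,ε}(Y_{s,u}) with eigenvalue μ_x − μ_s. -/

import Mathlib

noncomputable section

open Complex

/-- `q^{iλ} := exp(iλ · log q)`. -/
def qil (q lam : ℝ) : ℂ := Complex.exp (Complex.I * lam * Real.log q)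

/-- the real power `q^a` viewed as a complex number. -/
def qr (q a : ℝ) : ℂ := ((q ^ a : ℝ) : ℂ)

/-- the infinite `q`-shifted factorial `(w;p)_∞ = ∏_{j≥0} (1 - w p^j)`. -/
def qPoch (w p : ℂ) : ℂ := ∏' j : ℕ, (1 - w * p ^ j)

/-- the theta function `θ(w;p) = (w;p)_∞ (p/w;p)_∞`. -/
def qTheta (w p : ℂ) : ℂ := qPoch w p * qPoch (p / w) p

/-- `μ_s = (s + s⁻¹)/(q⁻¹ - q)`. -/
def mu (q : ℝ) (s : ℂ) : ℂ := (s + s⁻¹) / ((q : ℂ)⁻¹ - (q : ℂ))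

/-- The eigenfunction
`f_{x,s,u,λ,ε}(z) = (sq^{1−2iλ}x^{±1}, uszq^{1+iλ};q²)_∞ θ(q^{2ε−iλ}uz/s;q²) /
(uzq^{−iλ}x^{±1}, sq^{1−iλ}/(uz);q²)_∞`. -/
def fAW (q lam eps : ℝ) (x s u : ℂ) (z : ℂ) : ℂ :=
  (qPoch (s * (q : ℂ) * ((qil q lam)⁻¹) ^ 2 * x) ((q : ℂ) ^ 2) *
    qPoch (s * (q : ℂ) * ((qil q lam)⁻¹) ^ 2 / x) ((q : ℂ) ^ 2) *
    qPoch (u * s * z * (q : ℂ) * qil q lam) ((q : ℂ) ^ 2) *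
    qTheta (qr q (2 * eps) * (qil q lam)⁻¹ * u * z / s) ((q : ℂ) ^ 2)) /
  (qPoch (u * z * (qil q lam)⁻¹ * x) ((q : ℂ) ^ 2) *
    qPoch (u * z * (qil q lam)⁻¹ / x) ((q : ℂ) ^ 2) *
    qPoch (s * (q : ℂ) * (qil q lam)⁻¹ / (u * z)) ((q : ℂ) ^ 2))

/-- the denominator of `f_{x,s,u,λ,ε}` at the point `z`. -/
def fDen (q lam : ℝ) (x s u : ℂ) (z : ℂ) : ℂ :=
  qPoch (u * z * (qil q lam)⁻¹ * x) ((q : ℂ) ^ 2) *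
    qPoch (u * z * (qil q lam)⁻¹ / x) ((q : ℂ) ^ 2) *
    qPoch (s * (q : ℂ) * (qil q lam)⁻¹ / (u * z)) ((q : ℂ) ^ 2)
/-- action of the twisted primitive element `Y_{s,u}` in the representation `π_{λ,ε}`. -/
def piY (q lam eps : ℝ) (s u : ℂ) (f : ℂ → ℂ) (z : ℂ) : ℂ :=
  qr q (2 * eps) *
      ((s + s⁻¹ - u * z * (q : ℂ) * qil q lam - u⁻¹ * z⁻¹ * (q : ℂ)⁻¹ * (qil q lam)⁻¹) /
        ((q : ℂ)⁻¹ - (q : ℂ))) * f ((q : ℂ) ^ 2 * z)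
    + ((u * z * (qil q lam)⁻¹ + u⁻¹ * z⁻¹ * qil q lam - s - s⁻¹) / ((q : ℂ)⁻¹ - (q : ℂ))) * f z

/-! Under `z ↦ q²z` the `q`-Pochhammer symbols and `θ` obey first-order recurrences, so
`f(q²z)` is a rational multiple of `f(z)`: with `a = uzq^{-iλ}` and `t = uzq^{1+iλ}`,
`q^{2ε} a (1 - st)(1 - s/t) f(q²z) = -s (1 - ax)(1 - a/x) f(z)`.
Since `s + s⁻¹ - t - t⁻¹ = s⁻¹(1 - st)(1 - s/t)`, the eigenvalue equation then reduces to
`a + a⁻¹ - (1 - ax)(1 - a/x)/a = x + x⁻¹`. -/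

theorem multipliable_one_sub_mul_pow (w : ℂ) {p : ℂ} (hp : ‖p‖ < 1) :
    Multipliable (fun j : ℕ => 1 - w * p ^ j) := by
  have hsum : Summable (fun j : ℕ => ‖-(w * p ^ j)‖) := by
    simpa [norm_mul, norm_pow] using
      (summable_geometric_of_lt_one (norm_nonneg p) hp).mul_left ‖w‖
  simpa [sub_eq_add_neg] using multipliable_one_add_of_summable hsum

theorem qPoch_eq_one_sub_mul_qPoch (w : ℂ) {p : ℂ} (hp : ‖p‖ < 1) :
    qPoch w p = (1 - w) * qPoch (w * p) p := by
  have htail : Multipliable (fun j : ℕ => 1 - w * p ^ (j + 1)) :=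
    (multipliable_one_sub_mul_pow (w * p) hp).congr fun j => by ring
  have h := tprod_eq_zero_mul' (f := fun j : ℕ => 1 - w * p ^ j) htail
  simp only [pow_zero, mul_one] at h
  rw [qPoch, h, qPoch]
  exact congrArg _ (tprod_congr fun j => by ring)

theorem mul_qTheta_mul_left {w p : ℂ} (hw : w ≠ 0) (hp0 : p ≠ 0) (hp : ‖p‖ < 1) :
    w * qTheta (p * w) p = -qTheta w p := by
  rw [qTheta, qTheta, qPoch_eq_one_sub_mul_qPoch w hp,
    qPoch_eq_one_sub_mul_qPoch (p / (p * w)) hp,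
    show p / (p * w) * p = p / w by field_simp, show p * w = w * p by ring]
  field_simp
  ring

theorem eigen_identity_of_shift {e a t s x F₁ F₂ : ℂ} (ha : a ≠ 0) (ht : t ≠ 0) (hs : s ≠ 0)
    (hx : x ≠ 0)
    (hshift : e * a * (1 - s * t) * (1 - s / t) * F₂ = -s * (1 - a * x) * (1 - a / x) * F₁) :
    e * (s + s⁻¹ - t - t⁻¹) * F₂ + (a + a⁻¹ - s - s⁻¹) * F₁ =
      (x + x⁻¹ - s - s⁻¹) * F₁ := by
  field_simp at hshift ⊢
  linear_combination hshift

def fNum (q lam eps : ℝ) (x s u : ℂ) (z : ℂ) : ℂ :=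
  qPoch (s * (q : ℂ) * ((qil q lam)⁻¹) ^ 2 * x) ((q : ℂ) ^ 2) *
    qPoch (s * (q : ℂ) * ((qil q lam)⁻¹) ^ 2 / x) ((q : ℂ) ^ 2) *
    qPoch (u * s * z * (q : ℂ) * qil q lam) ((q : ℂ) ^ 2) *
    qTheta (qr q (2 * eps) * (qil q lam)⁻¹ * u * z / s) ((q : ℂ) ^ 2)

theorem fAW_eq_fNum_div_fDen (q lam eps : ℝ) (x s u z : ℂ) :
    fAW q lam eps x s u z = fNum q lam eps x s u z / fDen q lam x s u z := rfl

theorem qil_ne_zero (q lam : ℝ) : qil q lam ≠ 0 := Complex.exp_ne_zero _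

theorem norm_ofReal_sq_lt_one {q : ℝ} (hq : |q| < 1) : ‖(q : ℂ) ^ 2‖ < 1 := by
  rw [norm_pow, Complex.norm_real, Real.norm_eq_abs]
  exact pow_lt_one₀ (abs_nonneg q) hq two_ne_zero

theorem fNum_shift {q : ℝ} (hq0 : 0 < q) (hq1 : q < 1) (lam eps : ℝ) (x : ℂ) {s u z : ℂ}
    (hs : s ≠ 0) (hu : u ≠ 0) (hz : z ≠ 0) :
    qr q (2 * eps) * (u * z * (qil q lam)⁻¹) * (1 - s * (u * z * q * qil q lam)) *
        fNum q lam eps x s u ((q : ℂ) ^ 2 * z) = -s * fNum q lam eps x s u z := by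
  have hp : ‖(q : ℂ) ^ 2‖ < 1 := norm_ofReal_sq_lt_one (by rwa [abs_of_pos hq0])
  have hE : qr q (2 * eps) ≠ 0 := by
    rw [qr, Complex.ofReal_ne_zero]; exact (Real.rpow_pos_of_pos hq0 _).ne'
  have hw : qr q (2 * eps) * (qil q lam)⁻¹ * u * z / s ≠ 0 := by
    have := qil_ne_zero q lam; positivity
  have htheta := mul_qTheta_mul_left hw (pow_ne_zero 2 (Complex.ofReal_ne_zero.2 hq0.ne')) hp
  rw [fNum, fNum, show u * s * ((q : ℂ) ^ 2 * z) * q * qil q lam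
      = u * s * z * q * qil q lam * (q : ℂ) ^ 2 by ring,
    show qr q (2 * eps) * (qil q lam)⁻¹ * u * ((q : ℂ) ^ 2 * z) / s
      = (q : ℂ) ^ 2 * (qr q (2 * eps) * (qil q lam)⁻¹ * u * z / s) by ring,
    qPoch_eq_one_sub_mul_qPoch (u * s * z * q * qil q lam) hp,
    neg_eq_iff_eq_neg.mp htheta.symm]
  field_simp

theorem fDen_shift {q : ℝ} (hq1 : |q| < 1) (lam : ℝ) (x s u z : ℂ) :
    (1 - u * z * (qil q lam)⁻¹ * x) * (1 - u * z * (qil q lam)⁻¹ / x) *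
        fDen q lam x s u ((q : ℂ) ^ 2 * z) =
      (1 - s / (u * z * q * qil q lam)) * fDen q lam x s u z := by
  have hp := norm_ofReal_sq_lt_one hq1
  rw [fDen, fDen, qPoch_eq_one_sub_mul_qPoch (u * z * (qil q lam)⁻¹ * x) hp,
    qPoch_eq_one_sub_mul_qPoch (u * z * (qil q lam)⁻¹ / x) hp,
    qPoch_eq_one_sub_mul_qPoch (s * q * (qil q lam)⁻¹ / (u * ((q : ℂ) ^ 2 * z))) hp,
    show s * q * (qil q lam)⁻¹ / (u * ((q : ℂ) ^ 2 * z)) * (q : ℂ) ^ 2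
      = s * q * (qil q lam)⁻¹ / (u * z) by field_simp,
    show s * q * (qil q lam)⁻¹ / (u * ((q : ℂ) ^ 2 * z)) = s / (u * z * q * qil q lam) by
      field_simp]
  ring_nf

theorem fAW_shift {q : ℝ} (hq0 : 0 < q) (hq1 : q < 1) (lam eps : ℝ) {x s u z : ℂ}
    (hs : s ≠ 0) (hu : u ≠ 0) (hz : z ≠ 0) (hd1 : fDen q lam x s u z ≠ 0)
    (hd2 : fDen q lam x s u ((q : ℂ) ^ 2 * z) ≠ 0) :
    qr q (2 * eps) * (u * z * (qil q lam)⁻¹) * (1 - s * (u * z * q * qil q lam)) *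
        (1 - s / (u * z * q * qil q lam)) * fAW q lam eps x s u ((q : ℂ) ^ 2 * z) =
      -s * (1 - u * z * (qil q lam)⁻¹ * x) * (1 - u * z * (qil q lam)⁻¹ / x) *
        fAW q lam eps x s u z := by
  have hN := fNum_shift hq0 hq1 lam eps x hs hu hz
  have hD := fDen_shift (by rwa [abs_of_pos hq0]) lam x s u z
  rw [fAW_eq_fNum_div_fDen, fAW_eq_fNum_div_fDen, mul_div_assoc', mul_div_assoc',
    div_eq_div_iff hd2 hd1]
  linear_combination (1 - s / (u * z * q * qil q lam)) * fDen q lam x s u z * hN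
    + s * fNum q lam eps x s u z * hD

/-- `f_{x,s,u,λ,ε}` is an eigenfunction of `π_{λ,ε}(Y_{s,u})` with eigenvalue `μ_x − μ_s`. -/
theorem stmt2 (q : ℝ) (hq0 : 0 < q) (hq1 : q < 1) (lam eps : ℝ) (x s u : ℂ)
    (hx : x ≠ 0) (hs : s ≠ 0) (hu : u ≠ 0) (z : ℂ) (hz : z ≠ 0)
    (hd1 : fDen q lam x s u z ≠ 0) (hd2 : fDen q lam x s u ((q : ℂ) ^ 2 * z) ≠ 0) :
    piY q lam eps s u (fAW q lam eps x s u) z = (mu q x - mu q s) * fAW q lam eps x s u z := by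
  have hq : (q : ℂ) ≠ 0 := Complex.ofReal_ne_zero.2 hq0.ne'
  have hL := qil_ne_zero q lam
  have key := eigen_identity_of_shift (by positivity) (by positivity) hs hx
    (fAW_shift hq0 hq1 lam eps hs hu hz hd1 hd2)
  simp only [mul_inv, inv_inv] at key
  unfold piY mu
  linear_combination key / ((q : ℂ)⁻¹ - q)

end
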